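/- Suppose a knot invariant g₄ᵉˣ satisfies the slice–Bennequin inequality tb(K) + |rot(K)| ≤ 2·g₄ᵉˣ(K) − 1 for every Legendrian representative. If K has a Legendrian diagram with tb(K) = 0 and rot(K) = 2g(K) − 1 with g(K) ≥ 1, and P^i(K) has a Legendrian diagram with tb = 0 and rot = 2g(K) − 1 + 2i, then g₄ᵉˣ(P^i(K)) ≥ g₄ᵉˣ(K) + i whenever g₄ᵉˣ(K) ≤ g(K). -/
import Mathlib


/-- If the exotic slice–Bennequin inequality holds for the given
Legendrian diagrams of `K` (with `tb = 0`, `rot = 2g - 1`, `g ≥ 1`) and of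
`P^i(K)` (with `tb = 0`, `rot = 2g - 1 + 2i`), and `g₄ᵉˣ(K) ≤ g(K)`, then
`g₄ᵉˣ(P^i(K)) ≥ g₄ᵉˣ(K) + i`. -/
theorem exotic_genus_lower_bound (g g4exK g4exPiK : ℤ) (i : ℕ)
    (hg : 1 ≤ g)
    (hsbK : (0 : ℤ) + |2 * g - 1| ≤ 2 * g4exK - 1)
    (hsbPiK : (0 : ℤ) + |2 * g - 1 + 2 * i| ≤ 2 * g4exPiK - 1)
    (hle : g4exK ≤ g) :
    g4exK + i ≤ g4exPiK := by
  rw [abs_of_nonneg (by linarith)] at hsbK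
  rw [abs_of_nonneg (by have : (0:ℤ) ≤ (i:ℤ) := Int.natCast_nonneg i; linarith)] at hsbPiK
  omega
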